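/- arXiv:1401.3915 — 4 statements merged into one kernel-verified Lean document; each statement's English description precedes it below -/
import Mathlib

section
/- The total variation distance between a binomial distribution Bin(n, p) and the Poisson distribution with the same mean np is at most p. -/
open scoped BigOperators

/-- Probability mass function of the binomial distribution `Bin(n, p)` on `ℕ`. -/
noncomputable def binomialPMFReal (n : ℕ) (p : ℝ) (k : ℕ) : ℝ :=
  if k ≤ n then (n.choose k : ℝ) * p ^ k * (1 - p) ^ (n - k) else 0

/-- Probability mass function of the Poisson distribution with mean `r` on `ℕ`. -/
noncomputable def poissonPMFReal' (r : ℝ) (k : ℕ) : ℝ :=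
  Real.exp (-r) * r ^ k / (Nat.factorial k)

/-!
Stein–Chen method. For `h : ℕ → [0, 1]` and `l = n p`, `f = steinSolution l h` solves
`l f (k + 1) - k f k = h k - E h(Poi l)`. Averaging this against `W ~ Bin(n, p)` and using
`E[W f W] = l E f(W' + 1)` and `E f(W + 1) = E[(1 - p) f(W' + 1) + p f(W' + 2)]` with
`W' ~ Bin(n - 1, p)` gives `E h(W) - E h(Poi l) = l p E[f(W' + 2) - f(W' + 1)]`.
The solution for `h` is the superposition `∑ h i • f_i` of the solutions `f_i` for point masses.
For fixed `j ≥ 1` the increments `f_i (j + 1) - f_i j` sum to zero over `i` and are nonpositive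
except for `i = j`, where the increment is at most `1 / l`. Hence `|Δf| ≤ 1 / l`, and the
difference of the two distributions on any set is at most `p`.
-/

open Finset

section Poisson

variable (l : ℝ)

theorem hasSum_poissonPMFReal' : HasSum (poissonPMFReal' l) 1 := by
  have := (NormedSpace.expSeries_div_hasSum_exp l).mul_left (Real.exp (-l))
  rw [← Real.exp_eq_exp_ℝ, ← Real.exp_add, neg_add_cancel, Real.exp_zero] at this
  unfold poissonPMFReal'
  simpa only [mul_div_assoc] using this

theorem cast_add_one_mul_poissonPMFReal'_succ (k : ℕ) :
    (k + 1 : ℝ) * poissonPMFReal' l (k + 1) = l * poissonPMFReal' l k := by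
  simp only [poissonPMFReal', Nat.factorial_succ, pow_succ]
  push_cast
  field_simp

noncomputable def poissonCDF (j : ℕ) : ℝ := ∑ i ∈ range (j + 1), poissonPMFReal' l i

theorem one_sub_poissonCDF (j : ℕ) :
    1 - poissonCDF l j = ∑' k, poissonPMFReal' l (k + (j + 1)) := by
  rw [← (hasSum_poissonPMFReal' l).tsum_eq,
    ← (hasSum_poissonPMFReal' l).summable.sum_add_tsum_nat_add (j + 1), poissonCDF,
    add_sub_cancel_left]

variable {l}

theorem poissonPMFReal'_pos (hl : 0 < l) (k : ℕ) : 0 < poissonPMFReal' l k := by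
  unfold poissonPMFReal'
  positivity

theorem poissonPMFReal'_nonneg (hl : 0 ≤ l) (k : ℕ) : 0 ≤ poissonPMFReal' l k := by
  unfold poissonPMFReal'
  positivity

theorem mul_poissonCDF_le (hl : 0 ≤ l) (j : ℕ) :
    l * poissonCDF l j ≤ (j + 1) * poissonCDF l (j + 1) := by
  calc l * poissonCDF l j
      = ∑ i ∈ range (j + 1), (i + 1 : ℝ) * poissonPMFReal' l (i + 1) := by
        simp only [poissonCDF, mul_sum, cast_add_one_mul_poissonPMFReal'_succ]
    _ ≤ ∑ i ∈ range (j + 1), (j + 1 : ℝ) * poissonPMFReal' l (i + 1) := by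
        gcongr with i hi
        · exact poissonPMFReal'_nonneg hl _
        · exact_mod_cast Nat.lt_succ_iff.1 (mem_range.1 hi)
    _ ≤ (j + 1) * poissonCDF l (j + 1) := by
        rw [← mul_sum, poissonCDF, sum_range_succ' _ (j + 1)]
        gcongr
        exact le_add_of_nonneg_right (poissonPMFReal'_nonneg hl 0)

theorem mul_one_sub_poissonCDF_le (hl : 0 ≤ l) (j : ℕ) :
    (j + 1) * (1 - poissonCDF l (j + 1)) ≤ l * (1 - poissonCDF l j) := by
  have hsum (m : ℕ) : Summable fun k => poissonPMFReal' l (k + m) :=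
    (summable_nat_add_iff m).2 (hasSum_poissonPMFReal' l).summable
  rw [one_sub_poissonCDF, one_sub_poissonCDF, ← tsum_mul_left, ← tsum_mul_left]
  refine Summable.tsum_le_tsum (fun k => ?_) ((hsum _).mul_left _) ((hsum _).mul_left _)
  rw [← add_assoc, ← cast_add_one_mul_poissonPMFReal'_succ]
  have hjk : (j + 1 : ℝ) ≤ ((k + (j + 1) : ℕ) : ℝ) + 1 := by
    push_cast; linarith [k.cast_nonneg (α := ℝ)]
  exact mul_le_mul_of_nonneg_right hjk (poissonPMFReal'_nonneg hl _)

end Poisson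

section SteinKernel

-- The Stein solution `f_i` for the point mass `h = 𝟙{i}`.
noncomputable def steinKernel (l : ℝ) (i : ℕ) : ℕ → ℝ
  | 0 => 0
  | j + 1 => poissonPMFReal' l i * ((if i ≤ j then 1 else 0) - poissonCDF l j) /
      (l * poissonPMFReal' l j)

variable {l : ℝ}

theorem steinKernel_stein_eq (hl : 0 < l) (i k : ℕ) :
    l * steinKernel l i (k + 1) - k * steinKernel l i k =
      (if i = k then 1 else 0) - poissonPMFReal' l i := by
  have hπ := poissonPMFReal'_pos hl
  cases k with
  | zero =>
    simp only [steinKernel, poissonCDF, zero_add, sum_range_one, Nat.le_zero, CharP.cast_eq_zero,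
      zero_mul, sub_zero]
    field_simp [(hπ 0).ne']
    split_ifs with h
    · subst h; ring
    · ring
  | succ j =>
    have hrec := cast_add_one_mul_poissonPMFReal'_succ l j
    have hcdf : poissonCDF l (j + 1) = poissonCDF l j + poissonPMFReal' l (j + 1) :=
      sum_range_succ _ _
    simp only [steinKernel, hcdf]
    push_cast
    field_simp [(hπ j).ne', (hπ (j + 1)).ne']
    rcases lt_trichotomy i (j + 1) with hi | rfl | hi
    · simp only [if_pos hi.le, if_pos (Nat.lt_succ_iff.1 hi), if_neg hi.ne]
      linear_combination (-poissonPMFReal' l i * (1 - poissonCDF l j)) * hrec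
    · simp only [le_refl, Nat.not_succ_le_self, if_true, if_false]
      linear_combination (poissonPMFReal' l (j + 1) * poissonCDF l j) * hrec
    · simp only [if_neg hi.not_ge, if_neg (by omega : ¬i ≤ j), if_neg hi.ne']
      linear_combination (poissonPMFReal' l i * poissonCDF l j) * hrec

theorem hasSum_steinKernel (j : ℕ) : HasSum (fun i => steinKernel l i j) 0 := by
  cases j with
  | zero => exact hasSum_zero
  | succ j =>
    have hlow :
        HasSum (fun i => poissonPMFReal' l i * if i ≤ j then 1 else 0) (poissonCDF l j) := by
      have : HasSum (fun i => poissonPMFReal' l i * if i ≤ j then 1 else 0)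
          (∑ i ∈ range (j + 1), poissonPMFReal' l i * if i ≤ j then 1 else 0) :=
        hasSum_sum_of_ne_finset_zero fun i hi => by
          rw [if_neg (by simpa [Nat.lt_succ_iff] using hi), mul_zero]
      rwa [sum_congr rfl fun i hi => by rw [if_pos (Nat.lt_succ_iff.1 (mem_range.1 hi)), mul_one]]
        at this
    have hall := (hasSum_poissonPMFReal' l).mul_right (poissonCDF l j)
    simpa [steinKernel, mul_sub] using (hlow.sub hall).div_const (l * poissonPMFReal' l j)

theorem steinKernel_succ_le (hl : 0 < l) {i j : ℕ} (hij : i ≠ j + 1) :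
    steinKernel l i (j + 2) ≤ steinKernel l i (j + 1) := by
  have hπ := poissonPMFReal'_pos hl
  have hrec := cast_add_one_mul_poissonPMFReal'_succ l j
  have hle : (i ≤ j + 1) ↔ i ≤ j := by omega
  set b : ℝ := if i ≤ j then 1 else 0 with hb
  have key : (j + 1) * (b - poissonCDF l (j + 1)) ≤ l * (b - poissonCDF l j) := by
    by_cases h : i ≤ j
    · simpa [b, h] using mul_one_sub_poissonCDF_le hl.le j
    · simpa [b, h] using mul_poissonCDF_le hl.le j
  calc steinKernel l i (j + 2)
      = poissonPMFReal' l i * ((j + 1) * (b - poissonCDF l (j + 1))) /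
          (l * (l * poissonPMFReal' l j)) := by
        simp only [steinKernel, hle, ← hb, ← hrec]
        field_simp
    _ ≤ poissonPMFReal' l i * (l * (b - poissonCDF l j)) / (l * (l * poissonPMFReal' l j)) := by
        gcongr
        · exact (mul_pos hl (mul_pos hl (hπ j))).le
        · exact (hπ i).le
    _ = steinKernel l i (j + 1) := by
        simp only [steinKernel, ← hb]
        field_simp

theorem steinKernel_succ_sub_steinKernel_le (hl : 0 < l) (j : ℕ) :
    steinKernel l (j + 1) (j + 2) - steinKernel l (j + 1) (j + 1) ≤ 1 / l := by
  have hπ := poissonPMFReal'_pos hl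
  have hrec := cast_add_one_mul_poissonPMFReal'_succ l j
  have key := mul_poissonCDF_le hl.le j
  simp only [steinKernel, le_refl, if_true, Nat.not_succ_le_self, if_false]
  rw [show poissonPMFReal' l (j + 1) = l * poissonPMFReal' l j / (j + 1) by
    rw [← hrec]; field_simp]
  field_simp [(hπ j).ne']
  linarith

end SteinKernel

section TestFunctions

variable {ι : Type*} {d h : ι → ℝ}

theorem summable_mul_of_abs_le_one (hd : Summable d) (hh : ∀ i, |h i| ≤ 1) :
    Summable fun i => h i * d i :=
  hd.norm.of_norm_bounded fun i => by
    rw [norm_mul]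
    exact mul_le_of_le_one_left (norm_nonneg _) (hh i)

theorem tsum_mul_le_of_nonpos {j : ι} (hhd : Summable fun i => h i * d i)
    (hneg : ∀ i ≠ j, d i ≤ 0) (h0 : ∀ i, 0 ≤ h i) : ∑' i, h i * d i ≤ h j * d j := by
  classical
  refine hasSum_le (fun i => ?_) hhd.hasSum (hasSum_ite_eq j (h j * d j))
  by_cases hij : i = j
  · rw [if_pos hij, hij]
  · rw [if_neg hij]
    exact mul_nonpos_of_nonneg_of_nonpos (h0 i) (hneg i hij)

theorem abs_tsum_mul_le_of_hasSum_zero {j : ι} (hd : HasSum d 0) (hneg : ∀ i ≠ j, d i ≤ 0)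
    (h0 : ∀ i, 0 ≤ h i) (h1 : ∀ i, h i ≤ 1) : |∑' i, h i * d i| ≤ d j := by
  have hh : ∀ i, |h i| ≤ 1 := fun i => abs_le.2 ⟨by linarith [h0 i], h1 i⟩
  have hhd := summable_mul_of_abs_le_one hd.summable hh
  have hup := tsum_mul_le_of_nonpos hhd hneg h0
  have hcompl := tsum_mul_le_of_nonpos (h := fun i => 1 - h i)
    (summable_mul_of_abs_le_one hd.summable fun i =>
      abs_le.2 ⟨by linarith [h1 i], by linarith [h0 i]⟩)
    hneg (fun i => sub_nonneg.2 (h1 i))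
  simp only [sub_mul, one_mul] at hcompl
  rw [hd.summable.tsum_sub hhd, hd.tsum_eq] at hcompl
  exact abs_le.2 ⟨by nlinarith [h0 j, h1 j], by nlinarith [h0 j, h1 j]⟩

end TestFunctions

section SteinSolution

noncomputable def steinSolution (l : ℝ) (h : ℕ → ℝ) (j : ℕ) : ℝ :=
  ∑' i, h i * steinKernel l i j

variable {l : ℝ} {h : ℕ → ℝ}

theorem summable_mul_steinKernel (hh : ∀ i, |h i| ≤ 1) (j : ℕ) :
    Summable fun i => h i * steinKernel l i j :=
  summable_mul_of_abs_le_one (hasSum_steinKernel j).summable hh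

theorem steinSolution_stein_eq (hl : 0 < l) (hh : ∀ i, |h i| ≤ 1) (k : ℕ) :
    l * steinSolution l h (k + 1) - k * steinSolution l h k =
      h k - ∑' i, h i * poissonPMFReal' l i := by
  classical
  have hhπ := summable_mul_of_abs_le_one (hasSum_poissonPMFReal' l).summable hh
  refine HasSum.unique (((summable_mul_steinKernel hh (k + 1)).hasSum.mul_left l).sub
    ((summable_mul_steinKernel hh k).hasSum.mul_left (k : ℝ))) ?_
  convert (hasSum_ite_eq k (h k)).sub hhπ.hasSum using 1
  funext i
  have hK := steinKernel_stein_eq hl i k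
  split_ifs at hK ⊢ with hik
  · subst hik
    linear_combination h i * hK
  · linear_combination h i * hK

theorem abs_steinSolution_succ_sub_le (hl : 0 < l) (h0 : ∀ i, 0 ≤ h i) (h1 : ∀ i, h i ≤ 1)
    (j : ℕ) : |steinSolution l h (j + 2) - steinSolution l h (j + 1)| ≤ 1 / l := by
  have hh : ∀ i, |h i| ≤ 1 := fun i => abs_le.2 ⟨by linarith [h0 i], h1 i⟩
  have hd : HasSum (fun i => steinKernel l i (j + 2) - steinKernel l i (j + 1)) 0 := by
    simpa using (hasSum_steinKernel (j + 2)).sub (hasSum_steinKernel (j + 1))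
  calc |steinSolution l h (j + 2) - steinSolution l h (j + 1)|
      = |∑' i, h i * (steinKernel l i (j + 2) - steinKernel l i (j + 1))| := by
        simp only [steinSolution, mul_sub]
        rw [(summable_mul_steinKernel hh _).tsum_sub (summable_mul_steinKernel hh _)]
    _ ≤ steinKernel l (j + 1) (j + 2) - steinKernel l (j + 1) (j + 1) :=
        abs_tsum_mul_le_of_hasSum_zero hd (fun _ hi => sub_nonpos.2 (steinKernel_succ_le hl hi))
          h0 h1
    _ ≤ 1 / l := steinKernel_succ_sub_steinKernel_le hl j

end SteinSolution

section Binomial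

theorem binomialPMFReal_nonneg {p : ℝ} (hp0 : 0 ≤ p) (hp1 : p ≤ 1) (n k : ℕ) :
    0 ≤ binomialPMFReal n p k := by
  have : 0 ≤ 1 - p := sub_nonneg.2 hp1
  unfold binomialPMFReal
  split_ifs <;> positivity

theorem sum_binomialPMFReal (n : ℕ) (p : ℝ) : ∑ k ∈ range (n + 1), binomialPMFReal n p k = 1 := by
  calc ∑ k ∈ range (n + 1), binomialPMFReal n p k
      = ∑ k ∈ range (n + 1), p ^ k * (1 - p) ^ (n - k) * n.choose k := by
        refine sum_congr rfl fun k hk => ?_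
        rw [binomialPMFReal, if_pos (Nat.lt_succ_iff.1 (mem_range.1 hk))]
        ring
    _ = 1 := by rw [← add_pow, add_sub_cancel, one_pow]

theorem binomialPMFReal_succ_zero (n : ℕ) (p : ℝ) :
    binomialPMFReal (n + 1) p 0 = (1 - p) * binomialPMFReal n p 0 := by
  simp [binomialPMFReal, pow_succ, mul_comm]

theorem binomialPMFReal_succ_succ (n : ℕ) (p : ℝ) (k : ℕ) :
    binomialPMFReal (n + 1) p (k + 1) =
      (1 - p) * binomialPMFReal n p (k + 1) + p * binomialPMFReal n p k := by
  rcases lt_trichotomy k n with hk | rfl | hk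
  · have hsub : n - k = n - (k + 1) + 1 := by omega
    simp only [binomialPMFReal, if_pos (Nat.succ_le_of_lt hk), if_pos hk.le,
      if_pos (Nat.succ_le_succ hk.le), Nat.choose_succ_succ', Nat.add_sub_add_right, hsub]
    push_cast
    ring
  · simp [binomialPMFReal, pow_succ, mul_comm]
  · simp [binomialPMFReal, hk.not_ge, (Nat.lt_succ_of_lt hk).not_ge]

theorem cast_add_one_mul_binomialPMFReal_succ (n : ℕ) (p : ℝ) (k : ℕ) :
    (k + 1 : ℝ) * binomialPMFReal (n + 1) p (k + 1) = (n + 1) * p * binomialPMFReal n p k := by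
  by_cases hk : k ≤ n
  · have hchoose : ((n + 1) * n.choose k : ℝ) = (n + 1).choose (k + 1) * (k + 1) := by
      exact_mod_cast Nat.add_one_mul_choose_eq n k
    simp only [binomialPMFReal, if_pos hk, if_pos (Nat.succ_le_succ hk), Nat.add_sub_add_right]
    linear_combination -(p ^ (k + 1) * (1 - p) ^ (n - k)) * hchoose
  · simp [binomialPMFReal, hk]

theorem sum_binomialPMFReal_succ_mul (n : ℕ) (p : ℝ) (φ : ℕ → ℝ) :
    ∑ k ∈ range (n + 2), binomialPMFReal (n + 1) p k * φ k =
      ∑ k ∈ range (n + 1), binomialPMFReal n p k * ((1 - p) * φ k + p * φ (k + 1)) := by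
  have hlast : ∑ k ∈ range (n + 2), binomialPMFReal n p k * φ k =
      ∑ k ∈ range (n + 1), binomialPMFReal n p k * φ k := by
    rw [sum_range_succ, binomialPMFReal, if_neg (by omega), zero_mul, add_zero]
  calc ∑ k ∈ range (n + 2), binomialPMFReal (n + 1) p k * φ k
      = (1 - p) * ∑ k ∈ range (n + 2), binomialPMFReal n p k * φ k +
          p * ∑ k ∈ range (n + 1), binomialPMFReal n p k * φ (k + 1) := by
        rw [sum_range_succ', sum_range_succ' (fun k => binomialPMFReal n p k * φ k)]
        simp only [binomialPMFReal_succ_succ, binomialPMFReal_succ_zero, add_mul, sum_add_distrib,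
          mul_add, mul_sum, mul_assoc]
        ring
    _ = _ := by
        rw [hlast, mul_sum, mul_sum, ← sum_add_distrib]
        exact sum_congr rfl fun k _ => by ring

theorem sum_binomialPMFReal_succ_cast_mul (n : ℕ) (p : ℝ) (g : ℕ → ℝ) :
    ∑ k ∈ range (n + 2), binomialPMFReal (n + 1) p k * (k * g k) =
      (n + 1) * p * ∑ k ∈ range (n + 1), binomialPMFReal n p k * g (k + 1) := by
  rw [sum_range_succ', mul_sum]
  simp only [CharP.cast_eq_zero, zero_mul, mul_zero, add_zero]
  refine sum_congr rfl fun k _ => ?_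
  push_cast
  linear_combination g (k + 1) * cast_add_one_mul_binomialPMFReal_succ n p k

theorem sum_binomialPMFReal_mul_stein (n : ℕ) (p : ℝ) (g : ℕ → ℝ) :
    ∑ k ∈ range (n + 2), binomialPMFReal (n + 1) p k * ((n + 1) * p * g (k + 1) - k * g k) =
      (n + 1) * p ^ 2 * ∑ k ∈ range (n + 1), binomialPMFReal n p k * (g (k + 2) - g (k + 1)) := by
  calc _ = (n + 1) * p * ∑ k ∈ range (n + 2), binomialPMFReal (n + 1) p k * g (k + 1) -
          ∑ k ∈ range (n + 2), binomialPMFReal (n + 1) p k * (k * g k) := by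
        rw [mul_sum, ← sum_sub_distrib]
        exact sum_congr rfl fun k _ => by ring
    _ = _ := by
        rw [sum_binomialPMFReal_succ_mul, sum_binomialPMFReal_succ_cast_mul, mul_sum, mul_sum,
          mul_sum, ← sum_sub_distrib]
        exact sum_congr rfl fun k _ => by ring

theorem abs_sum_binomialPMFReal_mul_stein_le {p : ℝ} (hp0 : 0 ≤ p) (hp1 : p ≤ 1) (n : ℕ)
    {g : ℕ → ℝ} {ε : ℝ} (hg : ∀ j, |g (j + 2) - g (j + 1)| ≤ ε) :
    |∑ k ∈ range (n + 2), binomialPMFReal (n + 1) p k * ((n + 1) * p * g (k + 1) - k * g k)| ≤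
      (n + 1) * p ^ 2 * ε := by
  have hb := binomialPMFReal_nonneg hp0 hp1 n
  rw [sum_binomialPMFReal_mul_stein, abs_mul, abs_of_nonneg (by positivity)]
  gcongr
  calc |∑ k ∈ range (n + 1), binomialPMFReal n p k * (g (k + 2) - g (k + 1))|
      ≤ ∑ k ∈ range (n + 1), binomialPMFReal n p k * |g (k + 2) - g (k + 1)| := by
        refine (abs_sum_le_sum_abs _ _).trans_eq (sum_congr rfl fun k _ => ?_)
        rw [abs_mul, abs_of_nonneg (hb k)]
    _ ≤ ∑ k ∈ range (n + 1), binomialPMFReal n p k * ε :=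
        sum_le_sum fun k _ => mul_le_mul_of_nonneg_left (hg k) (hb k)
    _ = ε := by rw [← sum_mul, sum_binomialPMFReal, one_mul]

end Binomial

theorem binomialPMFReal_eq_poissonPMFReal'_of_mul_eq_zero {n : ℕ} {p : ℝ} (h : n * p = 0) :
    binomialPMFReal n p = poissonPMFReal' (n * p) := by
  funext k
  rw [h]
  rcases mul_eq_zero.1 h with hn | rfl
  · obtain rfl : n = 0 := by exact_mod_cast hn
    cases k <;> simp [binomialPMFReal, poissonPMFReal']
  · cases k <;> simp [binomialPMFReal, poissonPMFReal']

theorem abs_sum_binomialPMFReal_mul_sub_tsum_poissonPMFReal'_mul_le {p : ℝ} (hp : 0 < p)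
    (hp1 : p ≤ 1) (n : ℕ) {h : ℕ → ℝ} (h0 : ∀ k, 0 ≤ h k) (h1 : ∀ k, h k ≤ 1) :
    |∑ k ∈ range (n + 2), binomialPMFReal (n + 1) p k * h k -
      ∑' k, h k * poissonPMFReal' ((n + 1) * p) k| ≤ p := by
  set l : ℝ := (n + 1) * p
  have hl : 0 < l := by positivity
  have hh : ∀ k, |h k| ≤ 1 := fun k => abs_le.2 ⟨by linarith [h0 k], h1 k⟩
  set c := ∑' k, h k * poissonPMFReal' l k
  calc |∑ k ∈ range (n + 2), binomialPMFReal (n + 1) p k * h k - c|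
      = |∑ k ∈ range (n + 2), binomialPMFReal (n + 1) p k * (h k - c)| := by
        simp only [mul_sub, sum_sub_distrib, ← sum_mul, sum_binomialPMFReal, one_mul]
    _ = |∑ k ∈ range (n + 2), binomialPMFReal (n + 1) p k *
          (l * steinSolution l h (k + 1) - k * steinSolution l h k)| := by
        simp only [steinSolution_stein_eq hl hh, c]
    _ ≤ (n + 1) * p ^ 2 * (1 / l) :=
        abs_sum_binomialPMFReal_mul_stein_le hp.le hp1 n (abs_steinSolution_succ_sub_le hl h0 h1)
    _ = p := by
        simp only [l]
        field_simp

theorem tv_binomial_poisson_le_general (n : ℕ) (p : ℝ) (hp0 : 0 ≤ p) (hp1 : p ≤ 1)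
    (A : Set ℕ) :
    |(∑' k : ℕ, Set.indicator A (binomialPMFReal n p) k) -
      (∑' k : ℕ, Set.indicator A (poissonPMFReal' (n * p)) k)| ≤ p := by
  rcases (mul_nonneg n.cast_nonneg hp0).eq_or_lt' with hnp | hnp
  · rw [binomialPMFReal_eq_poissonPMFReal'_of_mul_eq_zero hnp, sub_self, abs_zero]
    exact hp0
  obtain ⟨m, rfl⟩ : ∃ m, n = m + 1 := Nat.exists_eq_succ_of_ne_zero (by rintro rfl; simp at hnp)
  have hind (f : ℕ → ℝ) (k : ℕ) : A.indicator f k = f k * A.indicator 1 k := by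
    by_cases hk : k ∈ A <;> simp [hk]
  have hbin : ∑' k, A.indicator (binomialPMFReal (m + 1) p) k =
      ∑ k ∈ range (m + 2), binomialPMFReal (m + 1) p k * A.indicator 1 k := by
    rw [tsum_eq_sum fun k hk => ?_]
    · exact sum_congr rfl fun k _ => hind _ k
    · rw [hind, binomialPMFReal, if_neg (by simpa [Nat.lt_succ_iff] using hk), zero_mul]
  rw [hbin, tsum_congr fun k => (hind _ k).trans (mul_comm _ _)]
  push_cast
  exact abs_sum_binomialPMFReal_mul_sub_tsum_poissonPMFReal'_mul_le
    (pos_of_mul_pos_right hnp (by positivity)) hp1 m (Set.indicator_nonneg fun _ _ => zero_le_one)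
    (Set.indicator_le_self' fun _ _ => zero_le_one)

/-- The total variation distance between `Bin(n, p)` and the Poisson distribution
with the same mean `n * p` is at most `p`. -/
theorem tv_binomial_poisson_le (n : ℕ) (hn : 0 < n) (p : ℝ) (hp0 : 0 ≤ p) (hp1 : p ≤ 1)
    (A : Set ℕ) :
    |(∑' k : ℕ, Set.indicator A (binomialPMFReal n p) k) -
      (∑' k : ℕ, Set.indicator A (poissonPMFReal' (n * p)) k)| ≤ p :=
  tv_binomial_poisson_le_general n p hp0 hp1 A
end

section
/- Conditioning the multi-type Poisson branching process B_K on survival yields, in expectation over types, σ(K) = Σ_{a,b} K_{ab} (1 − (1 − ρ(K;a))(1 − ρ(K;b))) π_a π_b, where σ(K) = E[|B| · 1{B_K survives}] and B is the first generation of B_K started from a random type distributed according to π. -/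
/-!
Only the size of the first generation enters, so the identity is a computation with products of
Poisson laws. For `a` fixed, write `μ b = K a b * π b` and `y b = 1 - ρ b`. Splitting
`|f| (1 - ∏ y^f)` over the coordinates `b`, each term is a factorial moment of a tilted product of
Poisson laws: `E[f b ∏ c, y c ^ f c] = μ b * y b * exp (∑ c, μ c * (y c - 1))`, and the fixed-point
equation identifies the exponential with `1 - ρ a`.
-/

open scoped BigOperators

open Finset

section PiProduct

variable {R β : Type*} [NormedCommRing R]

theorem summable_norm_pi_prod {n : ℕ} {f : Fin n → β → R}
    (hf : ∀ i, Summable fun k => ‖f i k‖) :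
    Summable fun g : Fin n → β => ‖∏ i, f i (g i)‖ := by
  induction n with
  | zero => exact Summable.of_finite
  | succ n ih =>
    rw [← (Fin.consEquiv fun _ => β).summable_iff]
    simpa [Function.comp_def, Fin.prod_univ_succ] using (hf 0).mul_norm (ih fun i => hf i.succ)

theorem tsum_pi_prod_of_summable_norm [CompleteSpace R] {n : ℕ} {f : Fin n → β → R}
    (hf : ∀ i, Summable fun k => ‖f i k‖) :
    ∑' g : Fin n → β, ∏ i, f i (g i) = ∏ i, ∑' k, f i k := by
  induction n with
  | zero => simp
  | succ n ih =>
    rw [← (Fin.consEquiv fun _ => β).tsum_eq, Fin.prod_univ_succ, ← ih fun i => hf i.succ,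
      tsum_mul_tsum_of_summable_norm (hf 0) (summable_norm_pi_prod fun i => hf i.succ)]
    simp [Fin.prod_univ_succ]

end PiProduct

theorem poissonPMFReal'_succ_mul (r : ℝ) (k : ℕ) :
    poissonPMFReal' r (k + 1) * (k + 1) = r * poissonPMFReal' r k := by
  simp only [poissonPMFReal', Nat.factorial_succ]
  push_cast
  field_simp
  ring

theorem hasSum_poissonPMFReal'_mul_pow (r x : ℝ) :
    HasSum (fun k => poissonPMFReal' r k * x ^ k) (Real.exp (r * (x - 1))) := by
  have hterm : (fun k => poissonPMFReal' r k * x ^ k) =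
      fun k => Real.exp (-r) * ((r * x) ^ k / k.factorial) := by
    funext k
    simp only [poissonPMFReal', mul_pow]
    ring
  rw [hterm, show r * (x - 1) = -r + r * x by ring, Real.exp_add, Real.exp_eq_exp_ℝ]
  exact (NormedSpace.expSeries_div_hasSum_exp (r * x)).mul_left _

theorem hasSum_poissonPMFReal'_mul_pow_mul_self (r x : ℝ) :
    HasSum (fun k => poissonPMFReal' r k * x ^ k * k) (r * x * Real.exp (r * (x - 1))) := by
  rw [← hasSum_nat_add_iff' 1]
  have hterm : (fun k => poissonPMFReal' r (k + 1) * x ^ (k + 1) * ((k : ℝ) + 1)) =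
      fun k => r * x * (poissonPMFReal' r k * x ^ k) := by
    funext k
    rw [mul_right_comm, poissonPMFReal'_succ_mul]
    ring
  simpa [hterm] using (hasSum_poissonPMFReal'_mul_pow r x).mul_left (r * x)

theorem hasSum_prod_poissonPMFReal'_mul_pow_mul_apply {n : ℕ} (μ y : Fin n → ℝ) (b : Fin n) :
    HasSum (fun f : Fin n → ℕ => (∏ c, poissonPMFReal' (μ c) (f c) * y c ^ f c) * f b)
      (μ b * y b * Real.exp (∑ c, μ c * (y c - 1))) := by
  classical
  -- the weight `f b` is put into the `b`-th factor, so that the family is a product over `c`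
  set w : Fin n → ℕ → ℝ :=
    fun c k => poissonPMFReal' (μ c) k * y c ^ k * if c = b then (k : ℝ) else 1
  have hw : ∀ c, HasSum (w c) ((if c = b then μ c * y c else 1) * Real.exp (μ c * (y c - 1))) := by
    intro c
    by_cases hc : c = b
    · simpa [w, hc] using hasSum_poissonPMFReal'_mul_pow_mul_self (μ c) (y c)
    · simpa [w, hc] using hasSum_poissonPMFReal'_mul_pow (μ c) (y c)
  have hsum : ∀ c, Summable fun k => ‖w c k‖ := fun c =>
    summable_abs_iff.mpr (hw c).summable
  have hprod : ∀ f : Fin n → ℕ,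
      ∏ c, w c (f c) = (∏ c, poissonPMFReal' (μ c) (f c) * y c ^ f c) * f b := by
    intro f
    rw [prod_mul_distrib, prod_ite_eq' univ b fun c => (f c : ℝ)]
    simp
  simp_rw [← hprod]
  rw [(summable_norm_pi_prod hsum).of_norm.hasSum_iff, tsum_pi_prod_of_summable_norm hsum]
  simp only [(hw _).tsum_eq]
  rw [prod_mul_distrib, prod_ite_eq' univ b fun c => μ c * y c, Real.exp_sum]
  simp

theorem tsum_prod_poissonPMFReal'_mul_card_mul_one_sub_prod_pow {n : ℕ} (μ y : Fin n → ℝ) :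
    ∑' f : Fin n → ℕ, (∏ b, poissonPMFReal' (μ b) (f b)) *
        ((∑ b, (f b : ℝ)) * (1 - ∏ b, y b ^ f b))
      = ∑ b, μ b * (1 - y b * Real.exp (∑ c, μ c * (y c - 1))) := by
  have hsplit : ∀ f : Fin n → ℕ,
      (∏ b, poissonPMFReal' (μ b) (f b)) * ((∑ b, (f b : ℝ)) * (1 - ∏ b, y b ^ f b))
        = ∑ b, ((∏ c, poissonPMFReal' (μ c) (f c) * (1 : Fin n → ℝ) c ^ f c) * f b
            - (∏ c, poissonPMFReal' (μ c) (f c) * y c ^ f c) * f b) := by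
    intro f
    rw [sum_sub_distrib, ← mul_sum, ← mul_sum]
    simp only [Pi.one_apply, one_pow, mul_one, prod_mul_distrib]
    ring
  simp_rw [hsplit]
  refine (hasSum_sum fun b _ => (hasSum_prod_poissonPMFReal'_mul_pow_mul_apply μ 1 b).sub
    (hasSum_prod_poissonPMFReal'_mul_pow_mul_apply μ y b)).tsum_eq.trans ?_
  simp only [Pi.one_apply, sub_self, mul_zero, sum_const_zero, Real.exp_zero, mul_one]
  exact sum_congr rfl fun b _ => by ring

/-- The left-hand side is `σ(K)`: the process started from a particle of type `a` with first
generation `f` survives iff some child's subtree survives, which, given `f`, has probability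
`1 - ∏ b, (1 - ρ b) ^ f b`. -/
theorem sigma_first_generation_on_survival_general
    (Q : ℕ) (K : Matrix (Fin Q) (Fin Q) ℝ) (π : Fin Q → ℝ)
    (ρ : Fin Q → ℝ)
    (hρ : ∀ a, 1 - ρ a = Real.exp (∑ b, K a b * π b * ((1 - ρ b) - 1))) :
    (∑ a, π a * ∑' f : Fin Q → ℕ, (∏ b, poissonPMFReal' (K a b * π b) (f b)) *
        ((∑ b, (f b : ℝ)) * (1 - ∏ b, (1 - ρ b) ^ (f b))))
      = ∑ a, ∑ b, K a b * (1 - (1 - ρ a) * (1 - ρ b)) * π a * π b := by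
  refine sum_congr rfl fun a _ => ?_
  have hsize := tsum_prod_poissonPMFReal'_mul_card_mul_one_sub_prod_pow
    (fun b => K a b * π b) (fun b => 1 - ρ b)
  beta_reduce at hsize
  rw [hsize, ← hρ a, mul_sum]
  exact sum_congr rfl fun b _ => by ring

/-- For the multi-type Poisson branching process `B_K` started from a single particle whose
type is distributed according to `π`, with `ρ a` the survival probability from type `a`
(the extinction probabilities satisfying the standard fixed-point equation `hρ`),
the expectation `σ(K) = E[|B| ⬝ 1{B_K survives}]` of the first generation size on the
survival event (the process dies out iff all children's subtrees die out, so
`E[|B(a)| ⬝ 1{survival}] = ∑' f, P(B(a)=f) * |f| * (1 - ∏ b (1-ρ b)^(f b))`)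
satisfies `σ(K) = ∑ a b, K a b * (1 - (1 - ρ a)(1 - ρ b)) * π a * π b`. -/
theorem sigma_first_generation_on_survival
    (Q : ℕ) (K : Matrix (Fin Q) (Fin Q) ℝ) (π : Fin Q → ℝ)
    (hK : ∀ a b, 0 ≤ K a b) (hKsymm : K.IsSymm)
    (hπ : ∀ a, 0 < π a) (hπ1 : ∑ a, π a = 1)
    (ρ : Fin Q → ℝ) (hρ0 : ∀ a, 0 ≤ ρ a) (hρ1 : ∀ a, ρ a ≤ 1)
    (hρ : ∀ a, 1 - ρ a = Real.exp (∑ b, K a b * π b * ((1 - ρ b) - 1))) :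
    (∑ a, π a * ∑' f : Fin Q → ℕ, (∏ b, poissonPMFReal' (K a b * π b) (f b)) *
        ((∑ b, (f b : ℝ)) * (1 - ∏ b, (1 - ρ b) ^ (f b))))
      = ∑ a, ∑ b, K a b * (1 - (1 - ρ a) * (1 - ρ b)) * π a * π b :=
  sigma_first_generation_on_survival_general Q K π ρ hρ
end

section
/- Let D̄ be an n×n real symmetric matrix of the form D̄ = C ⋆ J − diag(d̃), where C is a Q×Q symmetric matrix, the index set {1,…,n} is partitioned into Q blocks of sizes n_1,…,n_Q, (C ⋆ J)_{ij} = C_{ab} when i is in block a and j is in block b, and diag(d̃) assigns diagonal value d̃_a to indices in block a. Then the spectrum of D̄ consists of the Q eigenvalues of the Q×Q matrix M_{ab} = C_{ab}√(n_a n_b) − δ_{ab} d̃_a, together with the eigenvalue −d̃_a with multiplicity n_a − 1 for each a = 1,…,Q. -/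
/-!
With `P = (1 : Matrix κ κ R).submatrix β id` the `n × Q` block-indicator matrix,
`charmatrix D̄ = diag (X + d ∘ β) - P C Pᵀ` and `charmatrix M = diag (X + d) - S C S` with
`S = diag √n_a`. Over the fraction field of `ℝ[X]`, pulling out the diagonal factor and applying
the Weinstein–Aronszajn identity turns both determinants into `det (1 - C · diag (n_a / (X + d_a)))`,
because `Pᵀ diag (X + d ∘ β)⁻¹ P = diag (n_a / (X + d_a)) = S diag (X + d)⁻¹ S`. The prefactors are
`∏ a, (X + d_a) ^ n_a` and `∏ a, (X + d_a)`, whose quotient is `∏ a, (X + d_a) ^ (n_a - 1)`.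
-/

open scoped Polynomial

open Matrix

theorem Fintype.prod_comp_eq_prod_mul_prod_pow_card_sub_one {ι κ M : Type*} [Fintype ι]
    [Fintype κ] [DecidableEq κ] [CommMonoid M] (β : ι → κ)
    (hβ : ∀ a, 1 ≤ Fintype.card {i // β i = a}) (f : κ → M) :
    ∏ i, f (β i) = (∏ a, f a) * ∏ a, f a ^ (Fintype.card {i // β i = a} - 1) := by
  rw [← Finset.prod_fiberwise' Finset.univ β f, ← Finset.prod_mul_distrib]
  refine Finset.prod_congr rfl fun a _ => ?_
  rw [Finset.prod_const, ← pow_succ', Nat.sub_add_cancel (hβ a), Fintype.card_subtype]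

namespace Matrix

theorem det_diagonal_sub_mul_mul {ι κ K : Type*} [Fintype ι] [Fintype κ] [DecidableEq ι]
    [DecidableEq κ] [Field K] (e : ι → K) (he : ∀ i, e i ≠ 0)
    (U : Matrix ι κ K) (B : Matrix κ κ K) (V : Matrix κ ι K) :
    (diagonal e - U * B * V).det = (∏ i, e i) * (1 - B * (V * diagonal e⁻¹ * U)).det := by
  have hfactor : diagonal e - U * B * V = diagonal e * (1 - (diagonal e⁻¹ * U) * (B * V)) := by
    rw [Matrix.mul_sub, Matrix.mul_one, ← Matrix.mul_assoc, ← Matrix.mul_assoc (diagonal e),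
      diagonal_mul_diagonal, Matrix.mul_assoc U]
    simp [he]
  rw [hfactor, det_mul, det_diagonal, det_one_sub_mul_comm, Matrix.mul_assoc, Matrix.mul_assoc]

theorem submatrix_eq_one_submatrix_mul_mul {ι κ R : Type*} [Fintype κ] [DecidableEq κ]
    [CommRing R] (β : ι → κ) (B : Matrix κ κ R) :
    B.submatrix β β =
      (1 : Matrix κ κ R).submatrix β id * B * (1 : Matrix κ κ R).submatrix id β := by
  ext i j
  simp [mul_apply, one_apply]

theorem one_submatrix_mul_diagonal_comp_mul {ι κ R : Type*} [Fintype ι] [DecidableEq ι]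
    [DecidableEq κ] [CommRing R] (β : ι → κ) (f : κ → R) :
    (1 : Matrix κ κ R).submatrix id β * diagonal (f ∘ β) * (1 : Matrix κ κ R).submatrix β id =
      diagonal fun a => (Fintype.card {i // β i = a} : R) * f a := by
  ext a b
  simp only [mul_apply, submatrix_apply, one_apply, diagonal_apply, id, Function.comp_apply,
    mul_ite, ite_mul, mul_one, mul_zero, one_mul, zero_mul, Finset.sum_ite_eq', Finset.mem_univ,
    if_true]
  split_ifs with hab
  · subst hab
    calc (∑ j, if β j = a then if a = β j then f (β j) else 0 else 0)
        = ∑ j with β j = a, f a := by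
          rw [Finset.sum_filter]
          exact Finset.sum_congr rfl fun j _ => by split_ifs <;> simp_all
      _ = _ := by simp [Fintype.card_subtype]
  · exact Finset.sum_eq_zero fun j _ => by split_ifs <;> simp_all

theorem det_diagonal_comp_sub_submatrix {ι κ K : Type*} [Fintype ι] [Fintype κ] [DecidableEq ι]
    [DecidableEq κ] [Field K] (β : ι → κ) (hβ : ∀ a, 1 ≤ Fintype.card {i // β i = a})
    (B : Matrix κ κ K) (e s : κ → K) (he : ∀ a, e a ≠ 0)
    (hs : ∀ a, s a * s a = Fintype.card {i // β i = a}) :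
    (diagonal (e ∘ β) - B.submatrix β β).det =
      (diagonal e - diagonal s * B * diagonal s).det *
        ∏ a, e a ^ (Fintype.card {i // β i = a} - 1) := by
  have hfiber : (1 : Matrix κ κ K).submatrix id β * diagonal (e ∘ β)⁻¹ *
      (1 : Matrix κ κ K).submatrix β id = diagonal s * diagonal e⁻¹ * diagonal s := by
    rw [← Pi.inv_comp, one_submatrix_mul_diagonal_comp_mul, diagonal_mul_diagonal,
      diagonal_mul_diagonal]
    congr 1
    ext a
    rw [← hs, Pi.inv_apply]
    ring
  rw [submatrix_eq_one_submatrix_mul_mul, det_diagonal_sub_mul_mul (e ∘ β) (fun i => he (β i)),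
    det_diagonal_sub_mul_mul e he, hfiber, Function.comp_def,
    Fintype.prod_comp_eq_prod_mul_prod_pow_card_sub_one β hβ]
  ring

theorem det_diagonal_comp_sub_submatrix_of_isDomain {ι κ R : Type*} [Fintype ι] [Fintype κ]
    [DecidableEq ι] [DecidableEq κ] [CommRing R] [IsDomain R] (β : ι → κ)
    (hβ : ∀ a, 1 ≤ Fintype.card {i // β i = a}) (B : Matrix κ κ R) (e s : κ → R)
    (he : ∀ a, e a ≠ 0) (hs : ∀ a, s a * s a = Fintype.card {i // β i = a}) :
    (diagonal (e ∘ β) - B.submatrix β β).det =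
      (diagonal e - diagonal s * B * diagonal s).det *
        ∏ a, e a ^ (Fintype.card {i // β i = a} - 1) := by
  let φ := algebraMap R (FractionRing R)
  have hφ : Function.Injective φ := IsFractionRing.injective R (FractionRing R)
  apply hφ
  have key := det_diagonal_comp_sub_submatrix β hβ (B.map φ) (φ ∘ e) (φ ∘ s)
    (fun a => (map_ne_zero_iff φ hφ).mpr (he a)) (fun a => by simp [φ, ← map_mul, hs])
  simpa [RingHom.map_det, Matrix.map_sub, Matrix.map_mul, diagonal_map, submatrix_map,
    Function.comp_def] using key

end Matrix

theorem block_constant_matrix_charpoly_general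
    (n Q : ℕ) (β : Fin n → Fin Q)
    (hblock : ∀ a : Fin Q, 1 ≤ Fintype.card {i : Fin n // β i = a})
    (C : Matrix (Fin Q) (Fin Q) ℝ) (d : Fin Q → ℝ)
    (Dbar : Matrix (Fin n) (Fin n) ℝ)
    (hDbar : ∀ i j, Dbar i j = C (β i) (β j) - if i = j then d (β i) else 0)
    (M : Matrix (Fin Q) (Fin Q) ℝ)
    (hM : ∀ a b, M a b =
      C a b * Real.sqrt ((Fintype.card {i : Fin n // β i = a} : ℝ) *
        (Fintype.card {i : Fin n // β i = b} : ℝ)) - if a = b then d a else 0) :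
    Dbar.charpoly =
      M.charpoly * ∏ a : Fin Q,
        (Polynomial.X - Polynomial.C (-(d a))) ^ (Fintype.card {i : Fin n // β i = a} - 1) := by
  set e : Fin Q → ℝ[X] := fun a => Polynomial.X + Polynomial.C (d a)
  set s : Fin Q → ℝ[X] := fun a => Polynomial.C √(Fintype.card {i : Fin n // β i = a} : ℝ)
  have hDbar_char : Dbar.charmatrix = diagonal (e ∘ β) - (C.map Polynomial.C).submatrix β β := by
    ext i j : 1
    rw [charmatrix_apply, hDbar]
    simp only [Matrix.sub_apply, submatrix_apply, diagonal_apply, map_apply, Function.comp_apply, e]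
    split_ifs <;> simp
    ring
  have hM_char : M.charmatrix = diagonal e - diagonal s * C.map Polynomial.C * diagonal s := by
    ext a b : 1
    rw [charmatrix_apply, hM, Real.sqrt_mul (Nat.cast_nonneg _)]
    simp only [Matrix.sub_apply, mul_diagonal, diagonal_mul, diagonal_apply, map_apply, e, s]
    split_ifs <;> simp
    all_goals ring
  have hs : ∀ a, s a * s a = Fintype.card {i : Fin n // β i = a} := fun a => by
    simp [s, ← Polynomial.C_mul]
  rw [Matrix.charpoly, Matrix.charpoly, hDbar_char, hM_char,
    det_diagonal_comp_sub_submatrix_of_isDomain β hblock _ e s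
      (fun a => Polynomial.X_add_C_ne_zero (d a)) hs]
  simp [e]

/-- Spectrum of the block-constant matrix `D̄ = C ⋆ J - diag(d̃)`: its characteristic
polynomial factors as the characteristic polynomial of the `Q × Q` matrix
`M a b = C a b * √(n_a n_b) - δ_{ab} d̃ a` times `∏ a, (X + d̃ a)^(n_a - 1)`;
equivalently, the spectrum of `D̄` consists of the `Q` eigenvalues of `M` together with
`-d̃ a` with multiplicity `n_a - 1` for each block `a`. -/
theorem block_constant_matrix_charpoly
    (n Q : ℕ) (β : Fin n → Fin Q)
    (hblock : ∀ a : Fin Q, 1 ≤ Fintype.card {i : Fin n // β i = a})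
    (C : Matrix (Fin Q) (Fin Q) ℝ) (hC : C.IsSymm) (d : Fin Q → ℝ)
    (Dbar : Matrix (Fin n) (Fin n) ℝ)
    (hDbar : ∀ i j, Dbar i j = C (β i) (β j) - if i = j then d (β i) else 0)
    (M : Matrix (Fin Q) (Fin Q) ℝ)
    (hM : ∀ a b, M a b =
      C a b * Real.sqrt ((Fintype.card {i : Fin n // β i = a} : ℝ) *
        (Fintype.card {i : Fin n // β i = b} : ℝ)) - if a = b then d a else 0) :
    Dbar.charpoly =
      M.charpoly * ∏ a : Fin Q,
        (Polynomial.X - Polynomial.C (-(d a))) ^ (Fintype.card {i : Fin n // β i = a} - 1) :=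
  block_constant_matrix_charpoly_general n Q β hblock C d Dbar hDbar M hM
end

section
/- Davis–Kahan sin Θ theorem (Frobenius version): Let H, H' ∈ ℝ^{n×n} be symmetric, let V ⊂ ℝ be an interval, and let W, W' ∈ ℝ^{n×d} have orthonormal columns spanning the sum of eigenspaces of H (resp. H') for eigenvalues in V. Let δ > 0 be the minimum distance between any eigenvalue of H in V and any eigenvalue of H' not in V. Then there exists an orthogonal matrix R ∈ ℝ^{d×d} such that ‖W R − W'‖_F ≤ √2 · ‖H − H'‖_F / δ. -/
open scoped BigOperators
open Matrix

/-- Frobenius norm of a (rectangular) real matrix. -/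
noncomputable def frobNorm' {m n : ℕ} (A : Matrix (Fin m) (Fin n) ℝ) : ℝ :=
  Real.sqrt (∑ i, ∑ j, (A i j) ^ 2)

open scoped InnerProductSpace
open Module

/-! Write `S = W'ᵀ W` and `B = U'ᵀ W`, so that `SᵀS + BᵀB = 1`. Rotating `W` by an orthogonal `R`
with `tr (Rᵀ S) ≥ tr (SᵀS)` (polar decomposition; it exists because `S` is a contraction) gives
`‖W R - W'‖² = 2 (d - tr (Rᵀ S)) ≤ 2 ‖B‖²`. On the other hand the spectral decompositions turn
`U'ᵀ (H' - H) W` into the Sylvester expression `diag ν' B - B diag μ`, whose Frobenius norm is at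
least `δ ‖B‖` entrywise by the eigenvalue gap, and at most `‖H - H'‖` because multiplying by
matrices with orthonormal columns does not increase the Frobenius norm. -/

theorem exists_orthonormalBasis_inner_eq_norm {𝕜 E ι : Type*} [RCLike 𝕜] [NormedAddCommGroup E]
    [InnerProductSpace 𝕜 E] [FiniteDimensional 𝕜 E] [Fintype ι]
    (hcard : finrank 𝕜 E = Fintype.card ι) {t : ι → E}
    (ht : Pairwise fun i j => ⟪t i, t j⟫_𝕜 = 0) :
    ∃ b : OrthonormalBasis ι 𝕜 E, ∀ i, ⟪b i, t i⟫_𝕜 = ‖t i‖ := by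
  have hv : Orthonormal 𝕜 ({i | t i ≠ 0}.domRestrict fun i => (‖t i‖⁻¹ : 𝕜) • t i) := by
    refine ⟨fun i => norm_smul_inv_norm i.2, fun i j hij => ?_⟩
    simp [Set.domRestrict, inner_smul_left, inner_smul_right, ht (Subtype.coe_ne_coe.mpr hij)]
  obtain ⟨b, hb⟩ := hv.exists_orthonormalBasis_extension_of_card_eq hcard
  refine ⟨b, fun i => ?_⟩
  by_cases hi : t i = 0
  · simp [hi]
  · have : (‖t i‖ : 𝕜) ≠ 0 := by simpa using hi
    rw [hb i hi, inner_smul_left, inner_self_eq_norm_sq_to_K, map_inv₀, RCLike.conj_ofReal]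
    field_simp

theorem inner_toLp_col_toLp_col {m ι : Type*} [Fintype m] (A B : Matrix m ι ℝ) (i j : ι) :
    ⟪WithLp.toLp 2 (A.col i), WithLp.toLp 2 (B.col j)⟫_ℝ = (Aᵀ * B) i j := by
  simp [EuclideanSpace.inner_toLp_toLp, mul_apply, dotProduct, mul_comm]

section OrthogonalTrace

variable {ι : Type*} [Fintype ι] [DecidableEq ι]

/-- Complete the normalised nonzero columns `tₖ` of `T` to an orthonormal basis `R`; then
`tr (Rᵀ T) = ∑ ‖tₖ‖ ≥ ∑ ‖tₖ‖² = tr (Tᵀ T)` since `‖tₖ‖ ≤ 1`. -/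
theorem exists_mem_orthogonalGroup_trace_le_of_pairwise (T : Matrix ι ι ℝ)
    (hT : Pairwise fun i j => (Tᵀ * T) i j = 0) (hT1 : (1 - Tᵀ * T).PosSemidef) :
    ∃ R ∈ orthogonalGroup ι ℝ, trace (Tᵀ * T) ≤ trace (Rᵀ * T) := by
  set t : ι → EuclideanSpace ℝ ι := fun k => WithLp.toLp 2 (T.col k)
  obtain ⟨b, hb⟩ := exists_orthonormalBasis_inner_eq_norm finrank_euclideanSpace (t := t)
    (by simpa [t, inner_toLp_col_toLp_col] using hT)
  set R := (EuclideanSpace.basisFun ι ℝ).toBasis.toMatrix b.toBasis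
  have hRcol : ∀ k, WithLp.toLp 2 (R.col k) = b k := fun k => by
    ext i; simp [R, Basis.toMatrix_apply, Matrix.col]
  have hnorm : ∀ k, ‖t k‖ ^ 2 = (Tᵀ * T) k k := fun k => by
    rw [← real_inner_self_eq_norm_sq, inner_toLp_col_toLp_col]
  have hle : ∀ k, ‖t k‖ ^ 2 ≤ ‖t k‖ := fun k => by
    have h := hT1.diag_nonneg (i := k)
    rw [Matrix.sub_apply, one_apply_eq, ← hnorm] at h
    nlinarith [norm_nonneg (t k)]
  refine ⟨R, (EuclideanSpace.basisFun ι ℝ).toMatrix_orthonormalBasis_mem_orthogonal b, ?_⟩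
  calc trace (Tᵀ * T) = ∑ k, ‖t k‖ ^ 2 := by simp only [trace, diag, hnorm]
    _ ≤ ∑ k, ⟪b k, t k⟫_ℝ := Finset.sum_le_sum fun k _ => (hle k).trans_eq (hb k).symm
    _ = trace (Rᵀ * T) := by simp only [trace, diag, ← inner_toLp_col_toLp_col, hRcol, t]

/-- Diagonalising `SᵀS = V diag(λ) Vᵀ` reduces to the case `T = S V` with orthogonal columns. -/
theorem exists_mem_orthogonalGroup_trace_le (S : Matrix ι ι ℝ) (hS : (1 - Sᵀ * S).PosSemidef) :
    ∃ R ∈ orthogonalGroup ι ℝ, trace (Sᵀ * S) ≤ trace (Rᵀ * S) := by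
  have hA : (Sᵀ * S).IsHermitian := by
    simpa using (posSemidef_conjTranspose_mul_self S).isHermitian
  set V : Matrix ι ι ℝ := (hA.eigenvectorUnitary : Matrix ι ι ℝ)
  have hV : Vᵀ ∈ orthogonalGroup ι ℝ := Unitary.star_mem hA.eigenvectorUnitary.2
  have hVV : V * Vᵀ = 1 := (mem_orthogonalGroup_iff' ι ℝ).mp hV
  have hTT : (S * V)ᵀ * (S * V) = Vᵀ * (Sᵀ * S) * V := by
    simp only [transpose_mul, Matrix.mul_assoc]
  have hdiag : Vᵀ * (Sᵀ * S) * V = diagonal hA.eigenvalues := by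
    simpa [star_eq_conjTranspose] using hA.conjStarAlgAut_star_eigenvectorUnitary
  have hT1 : (1 - (S * V)ᵀ * (S * V)).PosSemidef := by
    rw [hTT]
    simpa [Matrix.mul_sub, Matrix.sub_mul, mul_eq_one_comm.mp hVV] using
      hS.conjTranspose_mul_mul_same V
  obtain ⟨R₀, hR₀, htr⟩ := exists_mem_orthogonalGroup_trace_le_of_pairwise (S * V)
    (fun i j hij => by dsimp only; rw [hTT, hdiag, diagonal_apply_ne _ hij]) hT1
  refine ⟨R₀ * Vᵀ, Submonoid.mul_mem _ hR₀ hV, ?_⟩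
  calc trace (Sᵀ * S) = trace ((S * V)ᵀ * (S * V)) := by
        rw [hTT, trace_mul_cycle, hVV, Matrix.one_mul]
    _ ≤ trace (R₀ᵀ * (S * V)) := htr
    _ = trace ((R₀ * Vᵀ)ᵀ * S) := by
        rw [transpose_mul, transpose_transpose, ← Matrix.mul_assoc, trace_mul_comm,
          Matrix.mul_assoc]

end OrthogonalTrace

section FrobeniusSq

variable {m n ι κ : Type*} [Fintype m] [Fintype n] [Fintype ι] [Fintype κ]

noncomputable def frobSq (A : Matrix m n ℝ) : ℝ :=
  ∑ i, ∑ j, A i j ^ 2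

theorem frobNorm'_eq_sqrt_frobSq {p q : ℕ} (A : Matrix (Fin p) (Fin q) ℝ) :
    frobNorm' A = √(frobSq A) :=
  rfl

theorem frobSq_nonneg (A : Matrix m n ℝ) : 0 ≤ frobSq A := by
  unfold frobSq; positivity

theorem frobSq_eq_trace (A : Matrix m n ℝ) : frobSq A = trace (Aᵀ * A) := by
  simp only [frobSq, trace, diag, mul_apply, transpose_apply, sq]
  exact Finset.sum_comm

theorem frobSq_transpose (A : Matrix m n ℝ) : frobSq Aᵀ = frobSq A := by
  simp only [frobSq, transpose_apply]
  exact Finset.sum_comm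

theorem frobSq_sub_comm (A B : Matrix m n ℝ) : frobSq (A - B) = frobSq (B - A) := by
  rw [← neg_sub, frobSq, frobSq]
  simp only [Matrix.neg_apply, neg_sq]

/-- `1 - U Uᵀ` is an orthogonal projection, so `‖A‖² - ‖Uᵀ A‖² = ‖(1 - U Uᵀ) A‖² ≥ 0`. -/
theorem frobSq_transpose_mul_le [DecidableEq m] [DecidableEq κ] {U : Matrix m κ ℝ}
    (hU : Uᵀ * U = 1) (A : Matrix m n ℝ) : frobSq (Uᵀ * A) ≤ frobSq A := by
  have hP : (1 - U * Uᵀ)ᵀ * (1 - U * Uᵀ) = 1 - U * Uᵀ := by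
    simp only [transpose_sub, transpose_one, transpose_mul, transpose_transpose, Matrix.mul_sub,
      Matrix.sub_mul, Matrix.mul_one, Matrix.one_mul, Matrix.mul_assoc]
    rw [← Matrix.mul_assoc Uᵀ, hU, Matrix.one_mul, sub_self, sub_zero]
  have h := frobSq_nonneg ((1 - U * Uᵀ) * A)
  rw [frobSq_eq_trace, transpose_mul, Matrix.mul_assoc, ← Matrix.mul_assoc _ _ A, hP,
    Matrix.sub_mul, Matrix.mul_sub, trace_sub, Matrix.one_mul] at h
  rw [frobSq_eq_trace, frobSq_eq_trace, transpose_mul, transpose_transpose]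
  simpa only [Matrix.mul_assoc, sub_nonneg] using h

theorem frobSq_mul_le [DecidableEq n] [DecidableEq ι] {W : Matrix n ι ℝ} (hW : Wᵀ * W = 1)
    (A : Matrix m n ℝ) : frobSq (A * W) ≤ frobSq A := by
  rw [← frobSq_transpose, transpose_mul, ← frobSq_transpose A]
  exact frobSq_transpose_mul_le hW Aᵀ

theorem frobSq_mul_sub [DecidableEq ι] {W W' : Matrix m ι ℝ} (hW : Wᵀ * W = 1)
    (hW' : W'ᵀ * W' = 1) {R : Matrix ι ι ℝ} (hR : R ∈ orthogonalGroup ι ℝ) :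
    frobSq (W * R - W') = 2 * Fintype.card ι - 2 * trace (W'ᵀ * W * R) := by
  have hWR : (W * R)ᵀ * (W * R) = 1 := by
    rw [transpose_mul, Matrix.mul_assoc, ← Matrix.mul_assoc Wᵀ, hW, Matrix.one_mul,
      (mem_orthogonalGroup_iff' ι ℝ).mp hR]
  have hcross : trace ((W * R)ᵀ * W') = trace (W'ᵀ * W * R) := by
    rw [← trace_transpose, transpose_mul, transpose_transpose, Matrix.mul_assoc]
  rw [frobSq_eq_trace, transpose_sub, Matrix.sub_mul, Matrix.mul_sub, Matrix.mul_sub, hWR, hW',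
    trace_sub, trace_sub, trace_sub, hcross, ← Matrix.mul_assoc, trace_one]
  ring

theorem exists_mem_orthogonalGroup_frobSq_mul_sub_le [DecidableEq ι] [DecidableEq m]
    {W W' : Matrix m ι ℝ} {U' : Matrix m κ ℝ} (hW : Wᵀ * W = 1) (hW' : W'ᵀ * W' = 1)
    (hcompl : W' * W'ᵀ + U' * U'ᵀ = 1) :
    ∃ R ∈ orthogonalGroup ι ℝ, frobSq (W * R - W') ≤ 2 * frobSq (U'ᵀ * W) := by
  set S := W'ᵀ * W
  set B := U'ᵀ * W
  have hSB : Sᵀ * S + Bᵀ * B = 1 := by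
    simp only [S, B, transpose_mul, transpose_transpose, Matrix.mul_assoc, ← Matrix.mul_add]
    rw [← Matrix.mul_assoc W', ← Matrix.mul_assoc U', ← Matrix.add_mul, hcompl, Matrix.one_mul,
      hW]
  have hS : (1 - Sᵀ * S).PosSemidef := by
    rw [← hSB, add_sub_cancel_left]
    simpa using posSemidef_conjTranspose_mul_self B
  obtain ⟨R, hR, htr⟩ := exists_mem_orthogonalGroup_trace_le S hS
  have hRt : Rᵀ ∈ orthogonalGroup ι ℝ := Unitary.star_mem hR
  refine ⟨Rᵀ, hRt, ?_⟩
  have hcard : (Fintype.card ι : ℝ) = trace (Sᵀ * S) + frobSq B := by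
    rw [frobSq_eq_trace, ← trace_add, hSB, trace_one]
  rw [frobSq_mul_sub hW hW' hRt, trace_mul_comm, hcard]
  linarith

end FrobeniusSq

theorem sq_mul_frobSq_le_frobSq_diagonal_mul_sub {m n : Type*} [Fintype m] [Fintype n]
    [DecidableEq m] [DecidableEq n] {μ : n → ℝ} {ν : m → ℝ} {δ : ℝ} (hδ : 0 ≤ δ)
    (hgap : ∀ a b, δ ≤ |μ a - ν b|) (X : Matrix m n ℝ) :
    δ ^ 2 * frobSq X ≤ frobSq (diagonal ν * X - X * diagonal μ) := by
  simp only [frobSq, Finset.mul_sum, Matrix.sub_apply, diagonal_mul, mul_diagonal]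
  gcongr with b _ a _
  calc δ ^ 2 * X b a ^ 2 ≤ |μ a - ν b| ^ 2 * X b a ^ 2 := by gcongr; exact hgap a b
    _ = (ν b * X b a - X b a * μ a) ^ 2 := by rw [sq_abs]; ring

theorem transpose_mul_sub_mul_eq {n ι κ ι' κ' : Type*} [Fintype n] [Fintype ι] [Fintype κ]
    [Fintype ι'] [Fintype κ'] [DecidableEq ι] [DecidableEq κ] [DecidableEq ι'] [DecidableEq κ']
    {H H' : Matrix n n ℝ} {W : Matrix n ι ℝ} {U : Matrix n κ ℝ} {W' : Matrix n ι' ℝ}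
    {U' : Matrix n κ' ℝ} {μ : ι → ℝ} {ν : κ → ℝ} {μ' : ι' → ℝ} {ν' : κ' → ℝ}
    (hH : H = W * diagonal μ * Wᵀ + U * diagonal ν * Uᵀ)
    (hH' : H' = W' * diagonal μ' * W'ᵀ + U' * diagonal ν' * U'ᵀ)
    (hW : Wᵀ * W = 1) (hWU : Wᵀ * U = 0) (hU' : U'ᵀ * U' = 1) (hWU' : W'ᵀ * U' = 0) :
    U'ᵀ * (H' - H) * W = diagonal ν' * (U'ᵀ * W) - (U'ᵀ * W) * diagonal μ := by
  have hUW : Uᵀ * W = 0 := by simpa using congrArg transpose hWU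
  have hU'W' : U'ᵀ * W' = 0 := by simpa using congrArg transpose hWU'
  have hHW : H * W = W * diagonal μ := by
    simp [hH, Matrix.add_mul, Matrix.mul_assoc, hUW, hW]
  have hU'H' : U'ᵀ * H' = diagonal ν' * U'ᵀ := by
    simp [hH', Matrix.mul_add, ← Matrix.mul_assoc, hU'W', hU']
  rw [Matrix.mul_sub, Matrix.sub_mul, hU'H', Matrix.mul_assoc, Matrix.mul_assoc, hHW,
    Matrix.mul_assoc]

theorem davis_kahan_sin_theta_general
    (n d : ℕ)
    (H H' : Matrix (Fin n) (Fin n) ℝ)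
    (W W' : Matrix (Fin n) (Fin d) ℝ)
    (U U' : Matrix (Fin n) (Fin (n - d)) ℝ)
    (μ μ' : Fin d → ℝ) (ν ν' : Fin (n - d) → ℝ)
    (hWo : Wᵀ * W = 1) (hWU : Wᵀ * U = 0)
    (hWo' : W'ᵀ * W' = 1) (hUo' : U'ᵀ * U' = 1) (hWU' : W'ᵀ * U' = 0)
    (hcomplete' : W' * W'ᵀ + U' * U'ᵀ = 1)
    (hH : H = W * Matrix.diagonal μ * Wᵀ + U * Matrix.diagonal ν * Uᵀ)
    (hH' : H' = W' * Matrix.diagonal μ' * W'ᵀ + U' * Matrix.diagonal ν' * U'ᵀ)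
    (δ : ℝ) (hδ : 0 < δ) (hgap : ∀ a b, δ ≤ |μ a - ν' b|) :
    ∃ R : Matrix (Fin d) (Fin d) ℝ, Rᵀ * R = 1 ∧
      frobNorm' (W * R - W') ≤ Real.sqrt 2 * frobNorm' (H - H') / δ := by
  obtain ⟨R, hR, hdist⟩ := exists_mem_orthogonalGroup_frobSq_mul_sub_le hWo hWo' hcomplete'
  have hgapB : δ ^ 2 * frobSq (U'ᵀ * W) ≤ frobSq (H - H') :=
    calc δ ^ 2 * frobSq (U'ᵀ * W)
        ≤ frobSq (diagonal ν' * (U'ᵀ * W) - (U'ᵀ * W) * diagonal μ) :=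
          sq_mul_frobSq_le_frobSq_diagonal_mul_sub hδ.le hgap _
      _ = frobSq (U'ᵀ * (H' - H) * W) := by
          rw [transpose_mul_sub_mul_eq hH hH' hWo hWU hUo' hWU']
      _ ≤ frobSq (H' - H) := (frobSq_mul_le hWo _).trans (frobSq_transpose_mul_le hUo' _)
      _ = frobSq (H - H') := frobSq_sub_comm _ _
  have hsq : δ ^ 2 * frobSq (W * R - W') ≤ 2 * frobSq (H - H') := by
    linarith [mul_le_mul_of_nonneg_left hdist (sq_nonneg δ)]
  refine ⟨R, (mem_orthogonalGroup_iff' _ _).mp hR, ?_⟩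
  rw [frobNorm'_eq_sqrt_frobSq, frobNorm'_eq_sqrt_frobSq, le_div_iff₀ hδ,
    ← Real.sqrt_mul zero_le_two]
  calc √(frobSq (W * R - W')) * δ = √(δ ^ 2 * frobSq (W * R - W')) := by
        rw [Real.sqrt_mul (sq_nonneg δ), Real.sqrt_sq hδ.le, mul_comm]
    _ ≤ √(2 * frobSq (H - H')) := Real.sqrt_le_sqrt hsq

/-- Davis–Kahan `sin Θ` theorem (Frobenius version).  `H` and `H'` are symmetric `n × n`
matrices with spectral decompositions `H = W diag(μ) Wᵀ + U diag(ν) Uᵀ` and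
`H' = W' diag(μ') W'ᵀ + U' diag(ν') U'ᵀ`, where `[W U]` and `[W' U']` are orthogonal,
the columns of `W` (resp. `W'`) span the sum of eigenspaces of `H` (resp. `H'`) for the
eigenvalues `μ` (resp. `μ'`) lying in the interval `V`, while `ν`, `ν'` lie outside `V`.
If `δ > 0` is a lower bound on the distance between any eigenvalue of `H` in `V` and any
eigenvalue of `H'` outside `V`, then there is an orthogonal `d × d` matrix `R` with
`‖W R - W'‖_F ≤ √2 ‖H - H'‖_F / δ`. -/
theorem davis_kahan_sin_theta
    (n d : ℕ) (hd : d ≤ n)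
    (H H' : Matrix (Fin n) (Fin n) ℝ)
    (V : Set ℝ) (hV : V.OrdConnected)
    (W W' : Matrix (Fin n) (Fin d) ℝ)
    (U U' : Matrix (Fin n) (Fin (n - d)) ℝ)
    (μ μ' : Fin d → ℝ) (ν ν' : Fin (n - d) → ℝ)
    (hWo : Wᵀ * W = 1) (hUo : Uᵀ * U = 1) (hWU : Wᵀ * U = 0)
    (hcomplete : W * Wᵀ + U * Uᵀ = 1)
    (hWo' : W'ᵀ * W' = 1) (hUo' : U'ᵀ * U' = 1) (hWU' : W'ᵀ * U' = 0)
    (hcomplete' : W' * W'ᵀ + U' * U'ᵀ = 1)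
    (hH : H = W * Matrix.diagonal μ * Wᵀ + U * Matrix.diagonal ν * Uᵀ)
    (hH' : H' = W' * Matrix.diagonal μ' * W'ᵀ + U' * Matrix.diagonal ν' * U'ᵀ)
    (hμ : ∀ a, μ a ∈ V) (hν : ∀ b, ν b ∉ V)
    (hμ' : ∀ a, μ' a ∈ V) (hν' : ∀ b, ν' b ∉ V)
    (δ : ℝ) (hδ : 0 < δ) (hgap : ∀ a b, δ ≤ |μ a - ν' b|) :
    ∃ R : Matrix (Fin d) (Fin d) ℝ, Rᵀ * R = 1 ∧
      frobNorm' (W * R - W') ≤ Real.sqrt 2 * frobNorm' (H - H') / δ :=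
  davis_kahan_sin_theta_general n d H H' W W' U U' μ μ' ν ν' hWo hWU hWo' hUo' hWU' hcomplete' hH
    hH' δ hδ hgap
end
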